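/- arXiv:1505.05460 — 5 statements merged into one kernel-verified Lean document; each statement's English description precedes it below -/
import Mathlib

section
/- With g = (r+1)·s and d = g + r − s, the set A has exactly 2d − g + 1 elements. -/
/-!
Write `r + ε = 2H`. The points with `j ≤ i + 1` are never excluded, and they number `2r + 1`.
Each remaining point of `A` lies in exactly one of three pieces: the triangle
`H - s ≤ i, i + 2 ≤ j ≤ H + s`, with `(2s).choose 2 = s(2s - 1)` points; the parallelogram
`0 ≤ i < H - s, 2H - 2s ≤ i + j < 2H - s` left of the chevron, with `s(H - s)` points; and the
parallelogram `H + s < j ≤ r, 2H + s - ε < i + j ≤ 2H + 2s - ε` right of it, with `s(r - H - s)`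
points. The total is `2r + 1 + s(r - 1) = 2d - g + 1`.
-/

open Finset

noncomputable section

def nearDiagonal (n : ℕ) : Finset (ℤ × ℤ) :=
  (Icc 0 (2 * n : ℤ)).image fun t => (t / 2, t - t / 2)

theorem mem_nearDiagonal {n : ℕ} {p : ℤ × ℤ} :
    p ∈ nearDiagonal n ↔ 0 ≤ p.1 ∧ p.1 ≤ p.2 ∧ p.2 ≤ p.1 + 1 ∧ p.2 ≤ n := by
  constructor
  · intro h
    obtain ⟨t, ht, rfl⟩ := mem_image.mp h
    rw [mem_Icc] at ht
    omega
  · intro h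
    exact mem_image.mpr ⟨p.1 + p.2, mem_Icc.mpr (by omega), Prod.ext (by omega) (by omega)⟩

theorem card_nearDiagonal (n : ℕ) : #(nearDiagonal n) = 2 * n + 1 := by
  rw [nearDiagonal, card_image_of_injective _ fun t t' h => by
    simp only [Prod.mk.injEq] at h; omega, Int.card_Icc]
  omega

def gapTwoPairs (a : ℤ) (n : ℕ) : Finset (ℤ × ℤ) :=
  {x ∈ Ico a (a + n) ×ˢ Ico a (a + n) | x.1 < x.2}.map
    (Equiv.prodCongr (Equiv.refl ℤ) (Equiv.addRight 1)).toEmbedding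

theorem mem_gapTwoPairs {a : ℤ} {n : ℕ} {p : ℤ × ℤ} :
    p ∈ gapTwoPairs a n ↔ a ≤ p.1 ∧ p.1 + 2 ≤ p.2 ∧ p.2 ≤ a + n := by
  simp only [gapTwoPairs, mem_map_equiv, Equiv.prodCongr_symm, Equiv.prodCongr_apply,
    Equiv.refl_symm, Equiv.addRight_symm, Equiv.coe_refl, Equiv.coe_addRight, Prod.map_fst,
    Prod.map_snd, id_eq, mem_filter, mem_product, mem_Ico]
  omega

theorem card_gapTwoPairs (a : ℤ) (n : ℕ) : #(gapTwoPairs a n) = n.choose 2 := by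
  rw [gapTwoPairs, card_map, card_product_filter_lt, Int.card_Ico, add_sub_cancel_left,
    Int.toNat_natCast]

theorem natCast_choose_two_two_mul (n : ℕ) :
    (((2 * n).choose 2 : ℕ) : ℤ) = (n : ℤ) * (2 * n - 1) := by
  have h : ((2 * n).choose 2 : ℚ) = (n : ℚ) * (2 * n - 1) := by
    rw [Nat.cast_choose_two]; push_cast; ring
  exact_mod_cast h

def rowBlock (I T : Finset ℤ) : Finset (ℤ × ℤ) :=
  (I ×ˢ T).map (Equiv.prodShear (Equiv.refl ℤ) fun i => Equiv.subRight i).toEmbedding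

theorem mem_rowBlock {I T : Finset ℤ} {p : ℤ × ℤ} :
    p ∈ rowBlock I T ↔ p.1 ∈ I ∧ p.1 + p.2 ∈ T := by
  simp [rowBlock, mem_map_equiv, add_comm]

theorem card_rowBlock (I T : Finset ℤ) : #(rowBlock I T) = #I * #T := by
  rw [rowBlock, card_map, card_product]

def colBlock (J T : Finset ℤ) : Finset (ℤ × ℤ) :=
  (rowBlock J T).map (Equiv.prodComm ℤ ℤ).toEmbedding

theorem mem_colBlock {J T : Finset ℤ} {p : ℤ × ℤ} :
    p ∈ colBlock J T ↔ p.2 ∈ J ∧ p.1 + p.2 ∈ T := by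
  simp [colBlock, mem_map_equiv, mem_rowBlock, add_comm]

theorem card_colBlock (J T : Finset ℤ) : #(colBlock J T) = #J * #T := by
  rw [colBlock, card_map, card_rowBlock]

theorem even_natCast_add_ite_odd (r : ℕ) : Even ((r : ℤ) + if Odd r then 1 else 0) := by
  split_ifs with h
  · exact (h.natCast (R := ℤ)).add_one
  · rw [add_zero]
    exact (Nat.not_odd_iff_even.mp h).natCast

end

theorem stmt4_general (r s : ℕ) (hrs : 2 * s ≤ r)
    (ε : ℤ) (hε : ε = if Odd r then 1 else 0)
    (A : Set (ℤ × ℤ))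
    (hA : A = {p : ℤ × ℤ | 0 ≤ p.1 ∧ p.1 ≤ p.2 ∧ p.2 ≤ (r : ℤ) ∧
        ¬(p.1 + 2 ≤ p.2 ∧ p.1 + p.2 < (r : ℤ) - 2 * s + ε) ∧
        ¬(p.1 + 2 ≤ p.2 ∧ (r : ℤ) + 2 * s < p.1 + p.2) ∧
        ¬(((r : ℤ) - s + ε ≤ p.1 + p.2 ∧ p.1 + p.2 ≤ (r : ℤ) + s) ∧
            (2 * p.1 ≤ (r : ℤ) - 2 * s - 2 + ε ∨ (r : ℤ) + 2 * s + 2 ≤ 2 * p.2))})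
    (g d : ℤ) (hg : g = ((r : ℤ) + 1) * s) (hd : d = g + r - s) :
    (A.ncard : ℤ) = 2 * d - g + 1 := by
  obtain ⟨H, hH⟩ := hε ▸ even_natCast_add_ite_odd r
  have hdecomp : A = ↑(nearDiagonal r ∪ gapTwoPairs (H - s) (2 * s) ∪
      rowBlock (Ico 0 (H - s)) (Ico (2 * H - 2 * s) (2 * H - s)) ∪
      colBlock (Ioc (H + s) r) (Ioc (2 * H + s - ε) (2 * H + 2 * s - ε))) := by
    rw [hA]
    ext p
    simp only [Set.mem_ofPred_eq, coe_union, Set.mem_union, mem_coe, mem_nearDiagonal,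
      mem_gapTwoPairs, mem_rowBlock, mem_colBlock, mem_Ico, mem_Ioc]
    omega
  rw [hdecomp, Set.ncard_coe_finset, card_union_of_disjoint, card_union_of_disjoint,
    card_union_of_disjoint, card_nearDiagonal, card_gapTwoPairs, card_rowBlock, card_colBlock,
    Int.card_Ico, Int.card_Ico, Int.card_Ioc, Int.card_Ioc]
  · push_cast
    rw [natCast_choose_two_two_mul, Int.toNat_of_nonneg (by omega), Int.toNat_of_nonneg (by omega),
      Int.toNat_of_nonneg (by omega), Int.toNat_of_nonneg (by omega), hd, hg]
    ring
  all_goals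
    refine disjoint_left.mpr fun p hp hq => ?_
    simp only [mem_union, mem_nearDiagonal, mem_gapTwoPairs, mem_rowBlock, mem_colBlock,
      mem_Ico, mem_Ioc] at hp hq
    omega

/-- Fix natural numbers `r`, `s` with `1 ≤ s` and `2s ≤ r`, and let `ε = 1` if `r` is odd,
`ε = 0` if `r` is even.  Let `A` be the set of integer pairs `(i,j)` with `0 ≤ i ≤ j ≤ r`
not lying in any of the three excluded regions (two half-open triangles and the closed
chevron).  Then, with `g = (r+1)s` and `d = g + r − s`, the set `A` has exactly
`2d − g + 1` elements. -/
theorem stmt4 (r s : ℕ) (hs : 1 ≤ s) (hrs : 2 * s ≤ r)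
    (ε : ℤ) (hε : ε = if Odd r then 1 else 0)
    (A : Set (ℤ × ℤ))
    (hA : A = {p : ℤ × ℤ | 0 ≤ p.1 ∧ p.1 ≤ p.2 ∧ p.2 ≤ (r : ℤ) ∧
        ¬(p.1 + 2 ≤ p.2 ∧ p.1 + p.2 < (r : ℤ) - 2 * s + ε) ∧
        ¬(p.1 + 2 ≤ p.2 ∧ (r : ℤ) + 2 * s < p.1 + p.2) ∧
        ¬(((r : ℤ) - s + ε ≤ p.1 + p.2 ∧ p.1 + p.2 ≤ (r : ℤ) + s) ∧
            (2 * p.1 ≤ (r : ℤ) - 2 * s - 2 + ε ∨ (r : ℤ) + 2 * s + 2 ≤ 2 * p.2))})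
    (g d : ℤ) (hg : g = ((r : ℤ) + 1) * s) (hd : d = g + r - s) :
    (A.ncard : ℤ) = 2 * d - g + 1 :=
  stmt4_general r s hrs ε hε A hA g d hg hd
end

section
/- Assume e(ℓs) = e((ℓ+1)s) = ℓ + c − s, as an equality of integers. Then for all integers i, j, k with 0 ≤ i ≤ j ≤ r and a(ℓ) ≤ k ≤ b(ℓ): if deg(i,k−1) + deg(j,k−1) ≥ S(k−1) and deg(i,k) + deg(j,k) ≤ S(k), then either i = j = ℓ, or i < ℓ < j and i + j = ℓ + c. -/
/-!
Since `δ ≥ 2`, the excess `e(k) = S(k) − 2k` is monotone, so the two equal values at `ℓs` and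
`(ℓ+1)s` force `S(k) = ℓ + c − s + 2k` on the whole window `[ℓs, (ℓ+1)s]`, which contains `k − 1`
and `k`. The two permissibility inequalities then become linear in `i + j`, and comparing each
position of `i, j` relative to `ℓ` with the window bounds of `a(ℓ)` and `b(ℓ)` leaves only the two
announced configurations.
-/

open Finset

theorem monotone_sum_range_sub_two_mul {δ : ℕ → ℕ} (hδ : ∀ t, 2 ≤ δ t) :
    Monotone fun k : ℕ => ((∑ t ∈ range (k + 1), δ t : ℕ) : ℤ) - 2 * k :=
  monotone_nat_of_le_succ fun n => by
    have := hδ (n + 1)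
    simp only [sum_range_succ _ (n + 1)]
    push_cast
    linarith

/-- `a(ℓ) = max(ℓs + 1, ℓs + ℓ − c + 1)` and `b(ℓ) = min((ℓ+1)s, ℓs + ℓ + s − c)`. -/
theorem loop_window_bounds {s c ℓ a b k : ℕ}
    (ha : a = if ℓ ≤ c then ℓ * s + 1 else ℓ * (s + 1) - c + 1)
    (hb : b = if ℓ ≤ c then ℓ * (s + 1) + s - c else (ℓ + 1) * s)
    (hak : a ≤ k) (hkb : k ≤ b) :
    ℓ * s + 1 ≤ k ∧ k ≤ (ℓ + 1) * s ∧ ℓ * s + ℓ + 1 ≤ k + c ∧ k + c ≤ ℓ * s + ℓ + s := by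
  have h₁ : ℓ * (s + 1) = ℓ * s + ℓ := by ring
  have h₂ : (ℓ + 1) * s = ℓ * s + s := by ring
  rw [h₁] at ha hb
  rw [h₂] at hb ⊢
  split_ifs at ha hb <;> omega

theorem permissible_pair_classification {s c ℓ : ℕ} {deg : ℕ → ℕ → ℤ}
    (hdeg : ∀ i k, deg i k =
      if ℓ < i then (i : ℤ) + k
      else if i = ℓ then (ℓ : ℤ) * (s + 1)
      else (i : ℤ) + k - s)
    (hℓ₁ : (c : ℤ) - s ≤ ℓ) (hℓ₂ : ℓ < c + s) {i j k : ℕ} (hij : i ≤ j)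
    (hk₁ : 1 ≤ k) (hk₂ : ℓ * s + ℓ + 1 ≤ k + c) (hk₃ : k + c ≤ ℓ * s + ℓ + s)
    (hlow : (ℓ : ℤ) + c - s + 2 * (k - 1 : ℕ) ≤ deg i (k - 1) + deg j (k - 1))
    (hup : deg i k + deg j k ≤ (ℓ : ℤ) + c - s + 2 * k) :
    (i = ℓ ∧ j = ℓ) ∨ (i < ℓ ∧ ℓ < j ∧ i + j = ℓ + c) := by
  obtain ⟨n, rfl⟩ : ∃ n, k = n + 1 := ⟨k - 1, by omega⟩
  simp only [Nat.add_sub_cancel, hdeg] at hlow hup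
  push_cast at hk₂ hk₃ hlow hup
  rcases lt_trichotomy i ℓ with hi | hi | hi
  · rcases lt_trichotomy j ℓ with hj | hj | hj
    · simp only [if_neg hi.not_gt, if_neg hj.not_gt, hi.ne, hj.ne, if_false] at hlow
      omega
    · simp only [if_neg hi.not_gt, hi.ne, hj, lt_irrefl, if_false, if_true] at hlow
      have : (ℓ : ℤ) ≤ i := by linarith
      omega
    · simp only [if_neg hi.not_gt, hi.ne, if_pos hj, if_false] at hlow hup
      omega
  · subst hi
    rcases hij.eq_or_lt with hj | hj
    · exact Or.inl ⟨rfl, hj.symm⟩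
    · simp only [lt_irrefl, if_false, if_true, if_pos hj] at hup
      have : (j : ℤ) ≤ i := by linarith
      omega
  · simp only [if_pos hi, if_pos (hi.trans_le hij)] at hup
    omega

theorem stmt7_general (r s : ℕ)
    (c : ℕ)
    (ℓ : ℕ) (hℓ1 : (c : ℤ) - s ≤ (ℓ : ℤ)) (hℓ2 : ℓ < min r (c + s))
    (a b : ℕ)
    (ha : a = if ℓ ≤ c then ℓ * s + 1 else ℓ * (s + 1) - c + 1)
    (hb : b = if ℓ ≤ c then ℓ * (s + 1) + s - c else (ℓ + 1) * s)
    (δ : ℕ → ℕ) (hδ : ∀ t, 2 ≤ δ t)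
    (S : ℕ → ℕ) (hS : ∀ k, S k = ∑ t ∈ Finset.range (k + 1), δ t)
    (e : ℕ → ℤ) (he : ∀ k, e k = (S k : ℤ) - 2 * k)
    (deg : ℕ → ℕ → ℤ)
    (hdeg : ∀ i k, deg i k =
      if ℓ < i then (i : ℤ) + k
      else if i = ℓ then (ℓ : ℤ) * (s + 1)
      else (i : ℤ) + k - s)
    (hyp1 : e (ℓ * s) = (ℓ : ℤ) + c - s)
    (hyp2 : e ((ℓ + 1) * s) = (ℓ : ℤ) + c - s) :
    ∀ i j k : ℕ, i ≤ j → j ≤ r → a ≤ k → k ≤ b →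
      (S (k - 1) : ℤ) ≤ deg i (k - 1) + deg j (k - 1) →
      deg i k + deg j k ≤ (S k : ℤ) →
      (i = ℓ ∧ j = ℓ) ∨ (i < ℓ ∧ ℓ < j ∧ i + j = ℓ + c) := by
  intro i j k hij _ hak hkb hlow hup
  obtain ⟨hk₁, hk₂, hk₃, hk₄⟩ := loop_window_bounds ha hb hak hkb
  have hmono : Monotone e := by
    convert monotone_sum_range_sub_two_mul hδ using 2 with x
    rw [he, hS]
  have hS_window : ∀ x, ℓ * s ≤ x → x ≤ (ℓ + 1) * s → (S x : ℤ) = ℓ + c - s + 2 * x :=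
    fun x h₁ h₂ => by linarith [he x, hmono.eq_of_ge_of_le (hyp1.trans hyp2.symm) h₁ h₂]
  rw [hS_window (k - 1) (by omega) (by omega)] at hlow
  rw [hS_window k (by omega) hk₂] at hup
  exact permissible_pair_classification hdeg hℓ1 (hℓ2.trans_le (min_le_right _ _)) hij
    (by omega) hk₃ hk₄ hlow hup

/-- The arithmetic content of Lemma 7.1: with `c = ⌈r/2⌉`, `c − s ≤ ℓ < min(r, c+s)`,
`a(ℓ)`, `b(ℓ)` as in the paper, `deg i k` the degree of `D_i` on `Γ_[0,k]`, `δ(t) ≥ 2`,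
`S(k) = δ(0) + ⋯ + δ(k)` and `e(k) = S(k) − 2k`, if `e(ℓs) = e((ℓ+1)s) = ℓ + c − s`, then
any pair `(i,j)` with `0 ≤ i ≤ j ≤ r` that is δ-permissible on some loop `γ_k` with
`a(ℓ) ≤ k ≤ b(ℓ)` satisfies either `i = j = ℓ`, or `i < ℓ < j` and `i + j = ℓ + c`. -/
theorem stmt7 (r s : ℕ) (hs : 1 ≤ s)
    (c : ℕ) (hc : c = (r + 1) / 2)
    (ℓ : ℕ) (hℓ1 : (c : ℤ) - s ≤ (ℓ : ℤ)) (hℓ2 : ℓ < min r (c + s))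
    (a b : ℕ)
    (ha : a = if ℓ ≤ c then ℓ * s + 1 else ℓ * (s + 1) - c + 1)
    (hb : b = if ℓ ≤ c then ℓ * (s + 1) + s - c else (ℓ + 1) * s)
    (δ : ℕ → ℕ) (hδ : ∀ t, 2 ≤ δ t)
    (S : ℕ → ℕ) (hS : ∀ k, S k = ∑ t ∈ Finset.range (k + 1), δ t)
    (e : ℕ → ℤ) (he : ∀ k, e k = (S k : ℤ) - 2 * k)
    (deg : ℕ → ℕ → ℤ)
    (hdeg : ∀ i k, deg i k =
      if ℓ < i then (i : ℤ) + k
      else if i = ℓ then (ℓ : ℤ) * (s + 1)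
      else (i : ℤ) + k - s)
    (hyp1 : e (ℓ * s) = (ℓ : ℤ) + c - s)
    (hyp2 : e ((ℓ + 1) * s) = (ℓ : ℤ) + c - s) :
    ∀ i j k : ℕ, i ≤ j → j ≤ r → a ≤ k → k ≤ b →
      (S (k - 1) : ℤ) ≤ deg i (k - 1) + deg j (k - 1) →
      deg i k + deg j k ≤ (S k : ℤ) →
      (i = ℓ ∧ j = ℓ) ∨ (i < ℓ ∧ ℓ < j ∧ i + j = ℓ + c) :=
  stmt7_general r s c ℓ hℓ1 hℓ2 a b ha hb δ hδ S hS e he deg hdeg hyp1 hyp2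
end

section
/- Let m be a natural number and let a, b : Fin(m+1) → ℝ with a injective. Then the set B = { t ∈ ℝ : there exist indices k ≠ k′ in Fin(m+1) such that a(k)·t + b(k) = a(k′)·t + b(k′) and a(k)·t + b(k) ≤ a(l)·t + b(l) for every l } is finite and has at most m elements. -/
/-!
If `k` is a minimizer at `t₁` and `k'` one at `t₂ > t₁`, comparing the two lines at both points
gives `a k' ≤ a k`: minimizers have weakly decreasing slopes. At a breakpoint `t` the two tied
minimizers have distinct slopes, so some minimizer `g t` is beaten in slope by another minimizer
at `t`. Then `g` is injective on the breakpoints (if `g t₁ = g t₂` with `t₁ < t₂`, the steeper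
minimizer at `t₂` would have slope above `a (g t₁)`), and `g t` is never the index of largest
slope; hence there are at most `m` breakpoints.
-/

open Function

section LowerEnvelope

variable {ι : Type*} (a b : ι → ℝ)

def IsMinimizerAt (t : ℝ) (k : ι) : Prop :=
  ∀ l, a k * t + b k ≤ a l * t + b l

def envelopeBreakpoints : Set ℝ :=
  {t | ∃ k k', k ≠ k' ∧ a k * t + b k = a k' * t + b k' ∧ IsMinimizerAt a b t k}

variable {a b}

theorem IsMinimizerAt.slope_le {t₁ t₂ : ℝ} {k k' : ι} (ht : t₁ < t₂)
    (hk : IsMinimizerAt a b t₁ k) (hk' : IsMinimizerAt a b t₂ k') : a k' ≤ a k := by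
  have h₁ := hk k'
  have h₂ := hk' k
  nlinarith

theorem exists_isMinimizerAt_lt_of_mem_envelopeBreakpoints (ha : Injective a) {t : ℝ}
    (ht : t ∈ envelopeBreakpoints a b) :
    ∃ k, IsMinimizerAt a b t k ∧ ∃ k', IsMinimizerAt a b t k' ∧ a k < a k' := by
  obtain ⟨k, k', hne, heq, hk⟩ := ht
  have hk' : IsMinimizerAt a b t k' := fun l => heq ▸ hk l
  rcases (ha.ne hne).lt_or_gt with hlt | hlt
  · exact ⟨k, hk, k', hk', hlt⟩
  · exact ⟨k', hk', k, hk, hlt⟩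

theorem envelopeBreakpoints_finite_and_ncard_le [Finite ι] [Nonempty ι] (ha : Injective a) :
    (envelopeBreakpoints a b).Finite ∧
      (envelopeBreakpoints a b).ncard ≤ Nat.card ι - 1 := by
  choose g hg k' hk' hlt using fun t : envelopeBreakpoints a b =>
    exists_isMinimizerAt_lt_of_mem_envelopeBreakpoints (b := b) ha t.2
  have hg_inj : Injective g := by
    intro t₁ t₂ hgt
    by_contra hne
    rcases (Subtype.coe_ne_coe.mpr hne).lt_or_gt with ht | ht
    · exact (hlt t₂).not_ge (hgt ▸ (hg t₁).slope_le ht (hk' t₂))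
    · exact (hlt t₁).not_ge (hgt ▸ (hg t₂).slope_le ht (hk' t₁))
  obtain ⟨kmax, hkmax⟩ := Finite.exists_max a
  have hg_ne : ∀ t, g t ≠ kmax := fun t h => (hlt t).not_ge (h ▸ hkmax (k' t))
  let g' : envelopeBreakpoints a b → ({kmax}ᶜ : Set ι) := fun t => ⟨g t, hg_ne t⟩
  have hg'_inj : Injective g' := fun t₁ t₂ h => hg_inj (congrArg Subtype.val h)
  have : Finite (envelopeBreakpoints a b) := Finite.of_injective g hg_inj
  refine ⟨Set.toFinite _, ?_⟩
  calc (envelopeBreakpoints a b).ncard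
      ≤ ({kmax}ᶜ : Set ι).ncard := by
        simpa only [Nat.card_coe_set_eq] using Nat.card_le_card_of_injective g' hg'_inj
    _ = Nat.card ι - 1 := by rw [Set.ncard_compl, Set.ncard_singleton]

end LowerEnvelope

/-- Given `m+1` affine functions `t ↦ a k * t + b k` on `ℝ` with pairwise distinct slopes,
the set of points `t` at which the pointwise minimum is attained by at least two distinct
indices is finite, with at most `m` elements. -/
theorem stmt8 (m : ℕ) (a b : Fin (m + 1) → ℝ) (ha : Function.Injective a) :
    ({t : ℝ | ∃ k k' : Fin (m + 1), k ≠ k' ∧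
        a k * t + b k = a k' * t + b k' ∧
        ∀ l, a k * t + b k ≤ a l * t + b l}).Finite ∧
    ({t : ℝ | ∃ k k' : Fin (m + 1), k ≠ k' ∧
        a k * t + b k = a k' * t + b k' ∧
        ∀ l, a k * t + b k ≤ a l * t + b l}).ncard ≤ m := by
  have h := envelopeBreakpoints_finite_and_ncard_le (b := b) ha
  rw [Nat.card_eq_fintype_card, Fintype.card_fin, Nat.add_sub_cancel] at h
  exact h
end

section
/- Let X be a type, ψ : X → ℝ a function, and m a natural number. Suppose there exist points v₀, …, v_m in X such that the values ψ(v₀), …, ψ(v_m) are pairwise distinct. Then the family of m+1 functions f_k : X → ℝ defined by f_k(v) = k·ψ(v), for k = 0, …, m, is tropically independent: for every choice of real numbers b₀, …, b_m there exists a point v ∈ X at which the minimum of { k·ψ(v) + b_k : 0 ≤ k ≤ m } is attained for exactly one index k. -/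
/-!
Proof idea: view `k ↦ s k * t + b k` as affine functions of `t` with strictly increasing slopes.
As `t` increases, the indices attaining the minimum can only move down. If at each of the
`m + 1` distinct values `t i` two indices `l i < k i` attained the minimum, then for `t i < t j`
we would get `k j ≤ l i < k i`; so `i ↦ k i` would be injective, hence a bijection of the
`m + 1` indices, yet it never takes the smallest index.
-/

section TropicalMinimum

variable {ι : Type*}

def AttainsMin (s b : ι → ℝ) (t : ℝ) (k : ι) : Prop :=
  ∀ l, s k * t + b k ≤ s l * t + b l

theorem AttainsMin.le_of_lt [LinearOrder ι] {s b : ι → ℝ} (hs : StrictMono s) {t t' : ℝ}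
    {k l : ι} (htt' : t < t') (hk : AttainsMin s b t k) (hl : AttainsMin s b t' l) : l ≤ k := by
  by_contra! hkl
  have hslope : 0 < (s l - s k) * (t' - t) := mul_pos (sub_pos.2 (hs hkl)) (sub_pos.2 htt')
  nlinarith [hk l, hl k]

theorem exists_attainsMin [Finite ι] [Nonempty ι] (s b : ι → ℝ) (t : ℝ) :
    ∃ k, AttainsMin s b t k :=
  Finite.exists_min fun l => s l * t + b l

theorem exists_lt_attainsMin_of_not_existsUnique [LinearOrder ι] [Finite ι] [Nonempty ι]
    {s b : ι → ℝ} {t : ℝ} (h : ¬∃! k, AttainsMin s b t k) :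
    ∃ k l, l < k ∧ AttainsMin s b t k ∧ AttainsMin s b t l := by
  obtain ⟨k, hk⟩ := exists_attainsMin s b t
  obtain ⟨l, hl, hlk⟩ : ∃ l, AttainsMin s b t l ∧ l ≠ k := by
    by_contra! hall
    exact h ⟨k, hk, hall⟩
  rcases hlk.lt_or_gt with hlt | hgt
  · exact ⟨k, l, hlt, hk, hl⟩
  · exact ⟨l, k, hgt, hl, hk⟩

theorem exists_existsUnique_attainsMin [LinearOrder ι] [Finite ι] [Nonempty ι] {s : ι → ℝ}
    (hs : StrictMono s) {t : ι → ℝ} (ht : Function.Injective t) (b : ι → ℝ) :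
    ∃ i, ∃! k, AttainsMin s b (t i) k := by
  by_contra! h
  choose k l hlk hk hl using fun i => exists_lt_attainsMin_of_not_existsUnique (h i)
  have hk_inj : Function.Injective k := by
    intro i j hij
    by_contra hne
    rcases (ht.ne hne).lt_or_gt with hlt | hgt
    · exact ((hl i).le_of_lt hs hlt (hk j)).not_gt (hij ▸ hlk i)
    · exact ((hl j).le_of_lt hs hgt (hk i)).not_gt (hij ▸ hlk j)
  obtain ⟨bot, hbot⟩ := Finite.exists_min (id : ι → ι)
  obtain ⟨i, hi⟩ := Finite.surjective_of_injective hk_inj bot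
  exact (hi ▸ hlk i).not_ge (hbot (l i))

end TropicalMinimum

/-- If `ψ : X → ℝ` takes `m+1` pairwise distinct values, then the family of functions
`v ↦ k·ψ(v)` for `k = 0, …, m` is tropically independent: for every choice of constants
`b k`, there is a point of `X` at which the minimum of `{k·ψ(v) + b k}` is attained for
exactly one index `k`. -/
theorem stmt9 {X : Type*} (ψ : X → ℝ) (m : ℕ) (v : Fin (m + 1) → X)
    (hv : Function.Injective fun k => ψ (v k)) :
    ∀ b : Fin (m + 1) → ℝ, ∃ x : X, ∃! k : Fin (m + 1),
      ∀ l : Fin (m + 1), ((k : ℕ) : ℝ) * ψ x + b k ≤ ((l : ℕ) : ℝ) * ψ x + b l := by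
  intro b
  have hs : StrictMono fun k : Fin (m + 1) => ((k : ℕ) : ℝ) :=
    fun _ _ h => Nat.cast_lt.2 h
  obtain ⟨i, hi⟩ := exists_existsUnique_attainsMin hs hv b
  exact ⟨v i, hi⟩
end

section
/- Let ℓ be a natural number with c − s ≤ ℓ ≤ ⌊r/2⌋, where c = ⌈r/2⌉. Then the number of pairs (i,j) ∈ A with i < ℓ, ℓ < j, and i + j = ℓ + c equals ℓ + s − c. -/
/-!
On the antidiagonal `i + j = ℓ + c` every pair lies in the strip `r - s + ε ≤ i + j ≤ r + s`
of the chevron and strictly between the two triangles, so with `2c = r + ε` membership in `A`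
reduces to the chevron condition `2i ≤ 2c - 2s - 2`, i.e. to `i < c - s`; the bound
`2j ≥ r + 2s + 2` cannot occur because `j = ℓ + c - i ≤ ℓ + s` and `2ℓ ≤ r`.
The pairs counted are therefore `(i, ℓ + c - i)` for `c - s ≤ i < ℓ`.
-/

/-- The set `A`. -/
def admissiblePairs (r s ε : ℤ) : Set (ℤ × ℤ) :=
  {p | 0 ≤ p.1 ∧ p.1 ≤ p.2 ∧ p.2 ≤ r ∧
    ¬(p.1 + 2 ≤ p.2 ∧ p.1 + p.2 < r - 2 * s + ε) ∧
    ¬(p.1 + 2 ≤ p.2 ∧ r + 2 * s < p.1 + p.2) ∧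
    ¬((r - s + ε ≤ p.1 + p.2 ∧ p.1 + p.2 ≤ r + s) ∧
        (2 * p.1 ≤ r - 2 * s - 2 + ε ∨ r + 2 * s + 2 ≤ 2 * p.2))}

theorem two_mul_add_one_div_two (r : ℕ) :
    2 * (((r + 1) / 2 : ℕ) : ℤ) = r + if Odd r then 1 else 0 := by
  split_ifs with h
  · rw [Nat.odd_iff] at h; omega
  · rw [Nat.not_odd_iff] at h; omega

theorem mem_admissiblePairs_and_antidiagonal_iff {r s ε c ℓ : ℤ} (hrs : 2 * s ≤ r)
    (hε : 0 ≤ ε ∧ ε ≤ 1) (hc : 2 * c = r + ε) (hℓc : c - s ≤ ℓ) (hℓr : 2 * ℓ ≤ r)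
    (p : ℤ × ℤ) :
    (p ∈ admissiblePairs r s ε ∧ p.1 < ℓ ∧ ℓ < p.2 ∧ p.1 + p.2 = ℓ + c) ↔
      p.1 ∈ Set.Ico (c - s) ℓ ∧ p.1 + p.2 = ℓ + c := by
  simp only [admissiblePairs, Set.mem_ofPred_eq, Set.mem_Ico]
  constructor
  · rintro ⟨⟨-, -, -, -, -, hchevron⟩, hiℓ, -, hsum⟩
    exact ⟨⟨le_of_not_gt fun hic => hchevron ⟨⟨by omega, by omega⟩, Or.inl (by omega)⟩, hiℓ⟩, hsum⟩
  · rintro ⟨⟨hci, hiℓ⟩, hsum⟩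
    exact ⟨⟨by omega, by omega, by omega, by omega, by omega, by omega⟩, hiℓ, by omega, hsum⟩

theorem Int.ncard_setOf_fst_mem_Ico_add_eq (a b n : ℤ) :
    {p : ℤ × ℤ | p.1 ∈ Set.Ico a b ∧ p.1 + p.2 = n}.ncard = (b - a).toNat := by
  have himage : {p : ℤ × ℤ | p.1 ∈ Set.Ico a b ∧ p.1 + p.2 = n}
      = (fun i => (i, n - i)) '' Set.Ico a b := by
    ext ⟨i, j⟩
    simp only [Set.mem_ofPred_eq, Set.mem_image, Prod.mk.injEq]
    constructor
    · rintro ⟨hi, hij⟩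
      exact ⟨i, hi, rfl, by omega⟩
    · rintro ⟨i, hi, rfl, rfl⟩
      exact ⟨hi, by ring⟩
  rw [himage, Set.ncard_image_of_injective _ fun x y h => (Prod.mk.inj h).1,
    Set.ncard_eq_toFinset_card', Set.toFinset_Ico, Int.card_Ico]

theorem stmt10_general (r s : ℕ) (hrs : 2 * s ≤ r)
    (ε : ℤ) (hε : ε = if Odd r then 1 else 0)
    (A : Set (ℤ × ℤ))
    (hA : A = {p : ℤ × ℤ | 0 ≤ p.1 ∧ p.1 ≤ p.2 ∧ p.2 ≤ (r : ℤ) ∧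
        ¬(p.1 + 2 ≤ p.2 ∧ p.1 + p.2 < (r : ℤ) - 2 * s + ε) ∧
        ¬(p.1 + 2 ≤ p.2 ∧ (r : ℤ) + 2 * s < p.1 + p.2) ∧
        ¬(((r : ℤ) - s + ε ≤ p.1 + p.2 ∧ p.1 + p.2 ≤ (r : ℤ) + s) ∧
            (2 * p.1 ≤ (r : ℤ) - 2 * s - 2 + ε ∨ (r : ℤ) + 2 * s + 2 ≤ 2 * p.2))})
    (c : ℕ) (hc : c = (r + 1) / 2)
    (ℓ : ℕ) (hℓ1 : (c : ℤ) - s ≤ (ℓ : ℤ)) (hℓ2 : ℓ ≤ r / 2) :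
    (({p ∈ A | p.1 < (ℓ : ℤ) ∧ (ℓ : ℤ) < p.2 ∧ p.1 + p.2 = (ℓ : ℤ) + c}).ncard : ℤ)
      = (ℓ : ℤ) + s - c := by
  have h2c : 2 * (c : ℤ) = r + ε := hc ▸ hε ▸ two_mul_add_one_div_two r
  have hε01 : 0 ≤ ε ∧ ε ≤ 1 := by split_ifs at hε <;> omega
  have hcounted : {p ∈ A | p.1 < (ℓ : ℤ) ∧ (ℓ : ℤ) < p.2 ∧ p.1 + p.2 = (ℓ : ℤ) + c}
      = {p : ℤ × ℤ | p.1 ∈ Set.Ico ((c : ℤ) - s) ℓ ∧ p.1 + p.2 = ℓ + c} :=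
    hA ▸ Set.ext (mem_admissiblePairs_and_antidiagonal_iff (by omega) hε01 h2c
      hℓ1 (by omega))
  rw [hcounted, Int.ncard_setOf_fst_mem_Ico_add_eq, Int.toNat_of_nonneg (by omega)]
  ring

/-- Counting claim in Case 1 of the inductive step (Theorem 1.1, `C(r+2,2) > 2d−g+1`):
with `c = ⌈r/2⌉` and `c − s ≤ ℓ ≤ ⌊r/2⌋`, the number of pairs `(i,j) ∈ A` with
`i < ℓ < j` and `i + j = ℓ + c` equals `ℓ + s − c`. -/
theorem stmt10 (r s : ℕ) (hs : 1 ≤ s) (hrs : 2 * s ≤ r)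
    (ε : ℤ) (hε : ε = if Odd r then 1 else 0)
    (A : Set (ℤ × ℤ))
    (hA : A = {p : ℤ × ℤ | 0 ≤ p.1 ∧ p.1 ≤ p.2 ∧ p.2 ≤ (r : ℤ) ∧
        ¬(p.1 + 2 ≤ p.2 ∧ p.1 + p.2 < (r : ℤ) - 2 * s + ε) ∧
        ¬(p.1 + 2 ≤ p.2 ∧ (r : ℤ) + 2 * s < p.1 + p.2) ∧
        ¬(((r : ℤ) - s + ε ≤ p.1 + p.2 ∧ p.1 + p.2 ≤ (r : ℤ) + s) ∧
            (2 * p.1 ≤ (r : ℤ) - 2 * s - 2 + ε ∨ (r : ℤ) + 2 * s + 2 ≤ 2 * p.2))})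
    (c : ℕ) (hc : c = (r + 1) / 2)
    (ℓ : ℕ) (hℓ1 : (c : ℤ) - s ≤ (ℓ : ℤ)) (hℓ2 : ℓ ≤ r / 2) :
    (({p ∈ A | p.1 < (ℓ : ℤ) ∧ (ℓ : ℤ) < p.2 ∧ p.1 + p.2 = (ℓ : ℤ) + c}).ncard : ℤ)
      = (ℓ : ℤ) + s - c :=
  stmt10_general r s hrs ε hε A hA c hc ℓ hℓ1 hℓ2
end
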